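/- For every δ with 0 < δ < 1/2, the regularized convex energy part f_{1,δ} is a convex function on all of ℝ. -/

import Mathlib

/-!
On `[δ, 1 - δ]` the function `f₁` is differentiable with increasing derivative `f₁'`, and outside
it `f_{1,δ}` continues `f₁` by the tangent quadratics of curvature `k = f₁''(δ) = f₁''(1 - δ) > 0`.
Such a quadratic extension is differentiable on all of `ℝ`, with derivative
`f₁'(c x) + k (x - c x)` where `c` clamps to `[δ, 1 - δ]`. This is monotone: `f₁' ∘ c` is, and
`x - c x = min 0 (x - δ) + max 0 (x - (1 - δ))`. A function with monotone derivative is convex.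
-/

/-- The Flory–Huggins convex energy part `f₁(φ) = φ log φ + (1-φ) log(1-φ)`. -/
noncomputable def f1 (φ : ℝ) : ℝ := φ * Real.log φ + (1 - φ) * Real.log (1 - φ)

/-- The regularized convex energy part `f_{1,δ}`, obtained from `f₁` by quadratic
extension outside `[δ, 1-δ]`, using `f₁'(s) = log(s/(1-s))` and `f₁''(s) = 1/(s(1-s))`. -/
noncomputable def f1d (δ φ : ℝ) : ℝ :=
  if φ ≤ δ then
    f1 δ + Real.log (δ / (1 - δ)) * (φ - δ) + 1 / (δ * (1 - δ)) * (φ - δ) ^ 2 / 2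
  else if φ ≤ 1 - δ then f1 φ
  else
    f1 (1 - δ) + Real.log ((1 - δ) / δ) * (φ - (1 - δ))
      + 1 / (δ * (1 - δ)) * (φ - (1 - δ)) ^ 2 / 2

open Set Real

noncomputable def quadraticExtension (f f' : ℝ → ℝ) (a b k x : ℝ) : ℝ :=
  if x ≤ a then f a + f' a * (x - a) + k * (x - a) ^ 2 / 2
  else if x ≤ b then f x
  else f b + f' b * (x - b) + k * (x - b) ^ 2 / 2

noncomputable def quadraticExtensionDeriv (f' : ℝ → ℝ) (a b k x : ℝ) : ℝ :=
  f' (max a (min b x)) + k * (min 0 (x - a) + max 0 (x - b))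

theorem HasDerivWithinAt.of_eqOn_isClosed {f u g u' : ℝ → ℝ} {s : Set ℝ} (hs : IsClosed s)
    (hfu : EqOn f u s) (hgu : EqOn g u' s) (hu : ∀ x ∈ s, HasDerivWithinAt u (u' x) s x)
    (x : ℝ) : HasDerivWithinAt f (g x) s x := by
  by_cases hx : x ∈ s
  · exact (hgu hx ▸ hu x hx).congr hfu (hfu hx)
  · exact HasFDerivWithinAt.of_notMem_closure (hs.closure_eq.symm ▸ hx)

theorem hasDerivAt_quadratic (c s a k x : ℝ) :
    HasDerivAt (fun y => c + s * (y - a) + k * (y - a) ^ 2 / 2) (s + k * (x - a)) x := by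
  have hsq := ((((hasDerivAt_id x).sub_const a).pow 2).const_mul k).div_const 2
  exact ((((hasDerivAt_id x).sub_const a).const_mul s).const_add c).add hsq |>.congr_deriv
    (by simp only [mul_one, Nat.cast_ofNat, id_eq, Nat.add_one_sub_one, pow_one]; ring)

section QuadraticExtension

variable {f f' : ℝ → ℝ} {a b k : ℝ}

theorem hasDerivAt_quadraticExtension (hab : a ≤ b)
    (hf : ∀ x ∈ Icc a b, HasDerivWithinAt f (f' x) (Icc a b) x) (x : ℝ) :
    HasDerivAt (quadraticExtension f f' a b k) (quadraticExtensionDeriv f' a b k x) x := by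
  have hleft : HasDerivWithinAt (quadraticExtension f f' a b k)
      (quadraticExtensionDeriv f' a b k x) (Iic a) x := by
    refine .of_eqOn_isClosed isClosed_Iic (u' := fun y => f' a + k * (y - a)) ?_ ?_
      (fun y _ => (hasDerivAt_quadratic (f a) (f' a) a k y).hasDerivWithinAt) x
    · rintro y (hy : y ≤ a)
      simp [quadraticExtension, hy]
    · rintro y (hy : y ≤ a)
      simp [quadraticExtensionDeriv, hy, min_eq_right (hy.trans hab), sub_nonpos.2 hy,
        sub_nonpos.2 (hy.trans hab)]
  have hmid : HasDerivWithinAt (quadraticExtension f f' a b k)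
      (quadraticExtensionDeriv f' a b k x) (Icc a b) x := by
    refine .of_eqOn_isClosed isClosed_Icc (u := f) (u' := f') ?_ ?_ hf x
    · rintro y ⟨hay, hyb⟩
      rcases hay.eq_or_lt with rfl | hay
      · simp [quadraticExtension]
      · simp [quadraticExtension, hay.not_ge, hyb]
    · rintro y ⟨hay, hyb⟩
      simp [quadraticExtensionDeriv, hay, hyb, sub_nonpos.2 hyb]
  have hright : HasDerivWithinAt (quadraticExtension f f' a b k)
      (quadraticExtensionDeriv f' a b k x) (Ici b) x := by
    refine .of_eqOn_isClosed isClosed_Ici (u' := fun y => f' b + k * (y - b)) ?_ ?_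
      (fun y _ => (hasDerivAt_quadratic (f b) (f' b) b k y).hasDerivWithinAt) x
    · rintro y (hy : b ≤ y)
      rcases hy.eq_or_lt with rfl | hy
      · rcases hab.eq_or_lt with rfl | hab
        · simp [quadraticExtension]
        · simp [quadraticExtension, hab.not_ge]
      · simp [quadraticExtension, (hab.trans_lt hy).not_ge, hy.not_ge]
    · rintro y (hy : b ≤ y)
      simp [quadraticExtensionDeriv, hy, max_eq_right hab, sub_nonneg.2 hy,
        sub_nonneg.2 (hab.trans hy)]
  have hcover : Iic a ∪ Icc a b ∪ Ici b = univ := by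
    rw [Iic_union_Icc_eq_Iic hab, Iic_union_Ici]
  simpa [hcover] using (hleft.union hmid).union hright

theorem monotone_quadraticExtensionDeriv (hab : a ≤ b) (hk : 0 ≤ k)
    (hf' : MonotoneOn f' (Icc a b)) : Monotone (quadraticExtensionDeriv f' a b k) := by
  intro x y hxy
  have hclamp : ∀ z, max a (min b z) ∈ Icc a b := fun z =>
    ⟨le_max_left _ _, max_le hab (min_le_left _ _)⟩
  have hclamp_mono : max a (min b x) ≤ max a (min b y) :=
    max_le_max le_rfl (min_le_min le_rfl hxy)
  unfold quadraticExtensionDeriv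
  gcongr
  exact hf' (hclamp x) (hclamp y) hclamp_mono

theorem convexOn_quadraticExtension (hab : a ≤ b) (hk : 0 ≤ k)
    (hf : ∀ x ∈ Icc a b, HasDerivWithinAt f (f' x) (Icc a b) x)
    (hf' : MonotoneOn f' (Icc a b)) : ConvexOn ℝ univ (quadraticExtension f f' a b k) := by
  have hderiv := hasDerivAt_quadraticExtension (k := k) hab hf
  refine Monotone.convexOn_univ_of_deriv (fun x => (hderiv x).differentiableAt) ?_
  rw [funext fun x => (hderiv x).deriv]
  exact monotone_quadraticExtensionDeriv hab hk hf'

end QuadraticExtension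

noncomputable def f1' (s : ℝ) : ℝ := log (s / (1 - s))

theorem hasDerivAt_f1 {x : ℝ} (hx0 : 0 < x) (hx1 : x < 1) : HasDerivAt f1 (f1' x) x := by
  have h := (hasDerivAt_mul_log hx0.ne').add
    ((hasDerivAt_mul_log (sub_ne_zero.2 hx1.ne')).comp x ((hasDerivAt_id x).const_sub 1))
  refine h.congr_deriv ?_
  rw [f1', log_div hx0.ne' (sub_ne_zero.2 hx1.ne')]
  ring

theorem monotoneOn_f1' : MonotoneOn f1' (Ioo 0 1) := by
  rintro x ⟨hx0, hx1⟩ y ⟨hy0, hy1⟩ hxy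
  refine log_le_log (div_pos hx0 (sub_pos.2 hx1)) ?_
  rw [div_le_div_iff₀ (sub_pos.2 hx1) (sub_pos.2 hy1)]
  nlinarith

theorem f1d_eq_quadraticExtension (δ : ℝ) :
    f1d δ = quadraticExtension f1 f1' δ (1 - δ) (1 / (δ * (1 - δ))) := by
  ext x
  simp only [f1d, quadraticExtension, f1', sub_sub_cancel]

/-- `f_{1,δ}` is convex on all of `ℝ`. -/
theorem regularized_energy_convex (δ : ℝ) (hδ0 : 0 < δ) (hδ : δ < 1 / 2) :
    ConvexOn ℝ Set.univ (f1d δ) := by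
  have hsub : Icc δ (1 - δ) ⊆ Ioo 0 1 := Icc_subset_Ioo hδ0 (by linarith)
  rw [f1d_eq_quadraticExtension]
  have hk : 0 ≤ 1 / (δ * (1 - δ)) := by
    have : 0 < 1 - δ := by linarith
    positivity
  exact convexOn_quadraticExtension (by linarith) hk
    (fun x hx => (hasDerivAt_f1 (hsub hx).1 (hsub hx).2).hasDerivWithinAt)
    (monotoneOn_f1'.mono hsub)
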